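/- Let m be a non-negative integer and let τ, z₁, z₂, t ∈ ℂ with Im τ > 0, z₁ ∉ ℤ + ℤτ and z₂ ∉ ℤ + ℤτ, and set q = e^{2πiτ}. Then Φ^{[m]}(τ, z₁, z₂, t) − e^{2πi(m+1)z₁} Φ^{[m]}(τ, z₁, z₂+τ, t) = Σ_{j=0}^{m−1} e^{πi(j+1)(z₁−z₂)} q^{−(j+1)²/(4(m+1))} ( Θ_{j+1,m+1}(τ, z₁+z₂, t) − Θ_{−(j+1),m+1}(τ, z₁+z₂, t) ). -/

import Mathlib

open Complex MeasureTheory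

namespace KW

local notation "π" => (Real.pi : ℂ)

/-- The lattice `ℤ + ℤτ`. -/
def InLattice (τ z : ℂ) : Prop := ∃ a b : ℤ, z = (a : ℂ) + (b : ℂ) * τ

/-- The mock theta function `Φ^[m]` of Kac–Wakimoto. -/
noncomputable def Phi (m : ℕ) (τ z₁ z₂ t : ℂ) : ℂ :=
  exp (2 * π * I * ((m : ℂ) + 1) * t) *
    ∑' j : ℤ,
      (exp (2 * π * I * (j : ℂ) * ((m : ℂ) + 1) * (z₁ + z₂)) *
            exp (2 * π * I * τ * (((m : ℂ) + 1) * (j : ℂ) ^ 2)) /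
          (1 - exp (2 * π * I * z₁) * exp (2 * π * I * τ * (j : ℂ))) -
        exp (-(2 * π * I * (j : ℂ) * ((m : ℂ) + 1) * (z₁ + z₂))) *
            exp (2 * π * I * τ * (((m : ℂ) + 1) * (j : ℂ) ^ 2)) /
          (1 - exp (-(2 * π * I * z₂)) * exp (2 * π * I * τ * (j : ℂ))))

/-- The degree-`k` theta function `Θ_{j,k}(τ,z,t)`. -/
noncomputable def Theta (j : ℤ) (k : ℕ) (τ z t : ℂ) : ℂ :=
  exp (2 * π * I * (k : ℂ) * t) *
    ∑' n : ℤ,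
      exp (2 * π * I * τ * (k : ℂ) * ((j : ℂ) / (2 * (k : ℂ)) + (n : ℂ)) ^ 2) *
        exp (2 * π * I * (k : ℂ) * ((j : ℂ) / (2 * (k : ℂ)) + (n : ℂ)) * z)

/-! Write `e(x) = exp (2πix)`, `q = e(τ)`, `k = m + 1`. The two halves of the summand of `Φ^[m]` are
`u_j / (1 - x_j)` with `u_j = e(jk(z₁+z₂)) q^{kj²}`, `x_j = e(z₁) q^j`, and the same expression at
`(-z₂, -z₁)`. Replacing `z₂` by `z₂ + τ` and multiplying by `e(kz₁)` turns the first half into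
`x_j^k u_j / (1 - x_j)`, and the second half into the same thing after the reindexing `j ↦ j + 1`.
Each difference is therefore the finite geometric sum `Σ_{r<k} u_j x_j^r`; summed over `j`, the
`r`-th pieces are the theta series `Θ_{±r,k}(τ, z₁+z₂, t)` up to explicit factors, and the `r = 0`
pieces cancel. -/

open Filter Asymptotics

lemma inLattice_neg_iff {τ z : ℂ} : InLattice τ (-z) ↔ InLattice τ z := by
  have key : ∀ w : ℂ, InLattice τ w → InLattice τ (-w) := fun w ⟨a, b, h⟩ =>
    ⟨-a, -b, by push_cast; rw [h]; ring⟩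
  exact ⟨fun h => neg_neg z ▸ key _ h, key z⟩

lemma exp_ne_one_of_not_inLattice {τ a : ℂ} (ha : ¬ InLattice τ a) (j : ℤ) :
    exp (2 * π * I * (a + j * τ)) ≠ 1 := by
  intro h
  obtain ⟨n, hn⟩ := exp_eq_one_iff.mp h
  have h2πI : 2 * π * I ≠ 0 := by simp [Real.pi_ne_zero]
  refine ha ⟨n, -j, mul_left_cancel₀ h2πI ?_⟩
  push_cast
  linear_combination hn

lemma norm_inv_one_sub_le_two {𝕜 : Type*} [NormedDivisionRing 𝕜] {x : 𝕜}
    (hx : ‖x‖ ≤ 1 / 2 ∨ 2 ≤ ‖x‖) : ‖(1 - x)⁻¹‖ ≤ 2 := by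
  have hsub : 1 / 2 ≤ ‖1 - x‖ := by
    have := abs_norm_sub_norm_le (1 : 𝕜) x
    rw [norm_one] at this
    rcases hx with hx | hx <;> cases abs_le.mp this <;> linarith
  rw [norm_inv]
  exact inv_le_of_inv_le₀ (by norm_num) (by simpa using hsub)

lemma norm_exp_two_pi_I_mul (w : ℂ) :
    ‖exp (2 * π * I * w)‖ = Real.exp (-(2 * Real.pi * w.im)) := by
  rw [norm_exp]
  congr 1
  simp [mul_re, mul_im]

/-- `e(a) q^j` tends to `0` as `j → +∞` and to `∞` as `j → -∞`. -/
lemma isBigO_inv_one_sub_exp {τ : ℂ} (hτ : 0 < τ.im) (a : ℂ) :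
    (fun j : ℤ => (1 - exp (2 * π * I * (a + j * τ)))⁻¹) =O[cofinite] fun _ => (1 : ℂ) := by
  have hnorm : ∀ j : ℤ, ‖exp (2 * π * I * (a + j * τ))‖ =
      Real.exp ((-(2 * Real.pi * τ.im)) * j + -(2 * Real.pi * a.im)) := fun j => by
    rw [norm_exp_two_pi_I_mul]; simp; ring
  have hslope : -(2 * Real.pi * τ.im) < 0 := by nlinarith [Real.pi_pos]
  have htop : ∀ᶠ j : ℤ in atTop, ‖exp (2 * π * I * (a + j * τ))‖ ≤ 1 / 2 := by
    simp only [hnorm]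
    exact (Real.tendsto_exp_atBot.comp <| tendsto_atBot_add_const_right _ _ <|
      (tendsto_intCast_atTop_atTop.const_mul_atTop_of_neg hslope)).eventually
        (Iic_mem_nhds (by norm_num))
  have hbot : ∀ᶠ j : ℤ in atBot, 2 ≤ ‖exp (2 * π * I * (a + j * τ))‖ := by
    simp only [hnorm]
    exact (Real.tendsto_exp_atTop.comp <| tendsto_atTop_add_const_right _ _ <|
      ((tendsto_intCast_atBot_iff.2 tendsto_id).const_mul_atBot_of_neg hslope)).eventually_ge_atTop 2
  rw [Int.cofinite_eq]
  refine .sup (.of_bound 2 ?_) (.of_bound 2 ?_) <;> simp only [norm_one, mul_one]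
  · exact hbot.mono fun j hj => norm_inv_one_sub_le_two (.inr hj)
  · exact htop.mono fun j hj => norm_inv_one_sub_le_two (.inl hj)

noncomputable def lambertTerm (k : ℕ) (τ a b : ℂ) (j : ℤ) : ℂ :=
  exp (2 * π * I * (j * k * (a + b) + k * j ^ 2 * τ)) / (1 - exp (2 * π * I * (a + j * τ)))

noncomputable def thetaTerm (k : ℕ) (τ a b : ℂ) (r : ℕ) (j : ℤ) : ℂ :=
  exp (2 * π * I * (j * k * (a + b) + k * j ^ 2 * τ + r * (a + j * τ)))

lemma thetaTerm_eq_exp_mul_jacobiTheta₂_term (k : ℕ) (τ a b : ℂ) (r : ℕ) (j : ℤ) :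
    thetaTerm k τ a b r j =
      exp (2 * π * I * r * a) * jacobiTheta₂_term j (k * (a + b) + r * τ) (2 * k * τ) := by
  rw [thetaTerm, jacobiTheta₂_term, ← exp_add]
  ring_nf

lemma summable_thetaTerm {k : ℕ} (hk : 0 < k) {τ : ℂ} (hτ : 0 < τ.im) (a b : ℂ) (r : ℕ) :
    Summable (thetaTerm k τ a b r) := by
  simp only [funext (thetaTerm_eq_exp_mul_jacobiTheta₂_term k τ a b r)]
  refine .mul_left _ ((summable_jacobiTheta₂_term_iff _ _).2 ?_)
  have : (2 * (k : ℂ) * τ).im = 2 * k * τ.im := by simp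
  rw [this]
  positivity

lemma lambertTerm_eq_thetaTerm_zero_mul (k : ℕ) (τ a b : ℂ) (j : ℤ) :
    lambertTerm k τ a b j = thetaTerm k τ a b 0 j * (1 - exp (2 * π * I * (a + j * τ)))⁻¹ := by
  simp [lambertTerm, thetaTerm, div_eq_mul_inv]

/-- No hypothesis on `a` is needed: the poles are finitely many and carry the junk value `0⁻¹ = 0`. -/
lemma summable_lambertTerm {k : ℕ} (hk : 0 < k) {τ : ℂ} (hτ : 0 < τ.im) (a b : ℂ) :
    Summable (lambertTerm k τ a b) := by
  simp only [funext (lambertTerm_eq_thetaTerm_zero_mul k τ a b)]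
  refine summable_of_isBigO' (summable_thetaTerm hk hτ a b 0) ?_
  simpa using (isBigO_refl (thetaTerm k τ a b 0) _).mul (isBigO_inv_one_sub_exp hτ a)

lemma thetaTerm_eq_mul_pow (k : ℕ) (τ a b : ℂ) (r : ℕ) (j : ℤ) :
    thetaTerm k τ a b r j = thetaTerm k τ a b 0 j * exp (2 * π * I * (a + j * τ)) ^ r := by
  rw [thetaTerm, thetaTerm, ← exp_nat_mul, ← exp_add]
  ring_nf

lemma lambertTerm_sub_pow_mul {k : ℕ} {τ a : ℂ} (b : ℂ) {j : ℤ}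
    (hx : exp (2 * π * I * (a + j * τ)) ≠ 1) :
    lambertTerm k τ a b j - exp (2 * π * I * (a + j * τ)) ^ k * lambertTerm k τ a b j =
      ∑ r ∈ Finset.range k, thetaTerm k τ a b r j := by
  have hx' : 1 - exp (2 * π * I * (a + j * τ)) ≠ 0 := sub_ne_zero.2 hx.symm
  rw [Finset.sum_congr rfl fun r _ => thetaTerm_eq_mul_pow k τ a b r j, ← Finset.mul_sum,
    lambertTerm_eq_thetaTerm_zero_mul]
  field_simp
  linear_combination (-thetaTerm k τ a b 0 j) * mul_neg_geom_sum (exp (2 * π * I * (a + j * τ))) k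

lemma exp_mul_lambertTerm_add_right (k : ℕ) (τ a b : ℂ) (j : ℤ) :
    exp (2 * π * I * k * a) * lambertTerm k τ a (b + τ) j =
      exp (2 * π * I * (a + j * τ)) ^ k * lambertTerm k τ a b j := by
  simp only [lambertTerm, mul_div_assoc', ← exp_nat_mul, ← exp_add]
  ring_nf

lemma exp_mul_lambertTerm_sub_left (k : ℕ) (τ a b : ℂ) (j : ℤ) :
    exp (-(2 * π * I * k * b)) * lambertTerm k τ (a - τ) b (j + 1) =
      exp (2 * π * I * (a + j * τ)) ^ k * lambertTerm k τ a b j := by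
  simp only [lambertTerm, mul_div_assoc', ← exp_nat_mul, ← exp_add]
  push_cast
  ring_nf

lemma tsum_sub_tsum_eq_sum_tsum {ι κ α : Type*} [AddCommGroup α] [TopologicalSpace α]
    [IsTopologicalAddGroup α] [T2Space α] {f g : ι → α} {h : κ → ι → α} {s : Finset κ}
    (hf : Summable f) (hg : Summable g) (hh : ∀ r ∈ s, Summable (h r))
    (hfg : ∀ i, f i - g i = ∑ r ∈ s, h r i) :
    ∑' i, f i - ∑' i, g i = ∑ r ∈ s, ∑' i, h r i := by
  rw [← hf.tsum_sub hg, ← Summable.tsum_finsetSum hh]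
  exact tsum_congr hfg

lemma tsum_lambertTerm_sub_add_right {k : ℕ} (hk : 0 < k) {τ : ℂ} (hτ : 0 < τ.im) {a : ℂ}
    (ha : ¬ InLattice τ a) (b : ℂ) :
    ∑' j, lambertTerm k τ a b j - exp (2 * π * I * k * a) * ∑' j, lambertTerm k τ a (b + τ) j =
      ∑ r ∈ Finset.range k, ∑' j, thetaTerm k τ a b r j := by
  rw [← tsum_mul_left]
  refine tsum_sub_tsum_eq_sum_tsum (summable_lambertTerm hk hτ a b)
    ((summable_lambertTerm hk hτ a _).mul_left _) (fun r _ => summable_thetaTerm hk hτ a b r)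
    fun j => ?_
  rw [exp_mul_lambertTerm_add_right]
  exact lambertTerm_sub_pow_mul b (exp_ne_one_of_not_inLattice ha j)

lemma tsum_lambertTerm_sub_sub_left {k : ℕ} (hk : 0 < k) {τ : ℂ} (hτ : 0 < τ.im) {a : ℂ}
    (ha : ¬ InLattice τ a) (b : ℂ) :
    ∑' j, lambertTerm k τ a b j - exp (-(2 * π * I * k * b)) * ∑' j, lambertTerm k τ (a - τ) b j =
      ∑ r ∈ Finset.range k, ∑' j, thetaTerm k τ a b r j := by
  rw [← tsum_mul_left, ← (Equiv.addRight (1 : ℤ)).tsum_eq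
    fun j => exp (-(2 * π * I * k * b)) * lambertTerm k τ (a - τ) b j]
  refine tsum_sub_tsum_eq_sum_tsum (summable_lambertTerm hk hτ a b)
    ((Equiv.addRight (1 : ℤ)).summable_iff.2 ((summable_lambertTerm hk hτ _ b).mul_left _))
    (fun r _ => summable_thetaTerm hk hτ a b r) fun j => ?_
  rw [Equiv.coe_addRight, exp_mul_lambertTerm_sub_left]
  exact lambertTerm_sub_pow_mul b (exp_ne_one_of_not_inLattice ha j)

lemma Theta_neg (j : ℤ) (k : ℕ) (τ z t : ℂ) : Theta j k τ (-z) t = Theta (-j) k τ z t := by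
  unfold Theta
  congr 1
  conv_lhs => rw [← (Equiv.neg ℤ).tsum_eq (α := ℂ)]
  refine tsum_congr fun n => ?_
  simp only [Equiv.neg_apply, ← exp_add]
  push_cast
  ring_nf

lemma exp_mul_tsum_thetaTerm_eq_mul_Theta {k : ℕ} (hk : k ≠ 0) (τ a b t : ℂ) (r : ℕ) :
    exp (2 * π * I * k * t) * ∑' j, thetaTerm k τ a b r j =
      exp (π * I * r * (a - b)) * exp (-(2 * π * I * τ * (r ^ 2 / (4 * k)))) *
        Theta r k τ (a + b) t := by
  unfold Theta
  conv_rhs => rw [mul_left_comm, ← tsum_mul_left]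
  congr 1
  refine tsum_congr fun n => ?_
  simp only [thetaTerm, ← exp_add]
  congr 1
  push_cast
  field_simp
  ring

lemma exp_mul_tsum_thetaTerm_sub_eq_mul_Theta_sub {k : ℕ} (hk : k ≠ 0) (τ z₁ z₂ t : ℂ) (r : ℕ) :
    exp (2 * π * I * k * t) *
        (∑' j, thetaTerm k τ z₁ z₂ r j - ∑' j, thetaTerm k τ (-z₂) (-z₁) r j) =
      exp (π * I * r * (z₁ - z₂)) * exp (-(2 * π * I * τ * (r ^ 2 / (4 * k)))) *
        (Theta r k τ (z₁ + z₂) t - Theta (-r) k τ (z₁ + z₂) t) := by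
  rw [mul_sub, exp_mul_tsum_thetaTerm_eq_mul_Theta hk, exp_mul_tsum_thetaTerm_eq_mul_Theta hk,
    neg_sub_neg, ← neg_add_rev, Theta_neg, ← mul_sub]

lemma Phi_eq_exp_mul_tsum_lambertTerm (m : ℕ) (τ z₁ z₂ t : ℂ) :
    Phi m τ z₁ z₂ t = exp (2 * π * I * (m + 1 : ℕ) * t) *
      ∑' j, (lambertTerm (m + 1) τ z₁ z₂ j - lambertTerm (m + 1) τ (-z₂) (-z₁) j) := by
  simp only [Phi, lambertTerm]
  push_cast
  congr 1
  refine tsum_congr fun j => ?_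
  simp only [← exp_add]
  ring_nf

/-- Lemma 5.1(e) of Kac–Wakimoto. -/
theorem statement1 (m : ℕ) (τ z₁ z₂ t : ℂ) (hτ : 0 < τ.im)
    (h₁ : ¬ InLattice τ z₁) (h₂ : ¬ InLattice τ z₂) :
    Phi m τ z₁ z₂ t - exp (2 * π * I * ((m : ℂ) + 1) * z₁) * Phi m τ z₁ (z₂ + τ) t =
      ∑ j ∈ Finset.range m,
        exp (π * I * ((j : ℂ) + 1) * (z₁ - z₂)) *
          exp (-(2 * π * I * τ * (((j : ℂ) + 1) ^ 2 / (4 * ((m : ℂ) + 1))))) *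
          (Theta ((j : ℤ) + 1) (m + 1) τ (z₁ + z₂) t -
            Theta (-((j : ℤ) + 1)) (m + 1) τ (z₁ + z₂) t) := by
  have hk : 0 < m + 1 := m.succ_pos
  have hsum := summable_lambertTerm hk hτ
  have hdiff : Phi m τ z₁ z₂ t - exp (2 * π * I * ((m : ℂ) + 1) * z₁) * Phi m τ z₁ (z₂ + τ) t =
      exp (2 * π * I * (m + 1 : ℕ) * t) *
        ∑ r ∈ Finset.range (m + 1), (∑' j, thetaTerm (m + 1) τ z₁ z₂ r j -
          ∑' j, thetaTerm (m + 1) τ (-z₂) (-z₁) r j) := by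
    rw [Finset.sum_sub_distrib, ← tsum_lambertTerm_sub_add_right hk hτ h₁,
      ← tsum_lambertTerm_sub_sub_left hk hτ (mt inLattice_neg_iff.1 h₂),
      Phi_eq_exp_mul_tsum_lambertTerm, Phi_eq_exp_mul_tsum_lambertTerm,
      (hsum _ _).tsum_sub (hsum _ _), (hsum _ _).tsum_sub (hsum _ _), neg_add']
    push_cast
    ring_nf
  rw [hdiff, Finset.mul_sum, Finset.sum_range_succ']
  simp only [exp_mul_tsum_thetaTerm_sub_eq_mul_Theta_sub (Nat.succ_ne_zero m), Nat.cast_zero,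
    neg_zero, sub_self, mul_zero, add_zero]
  push_cast
  rfl

end KW
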